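/- Let A be an n×n real matrix and let (C_i)_{i∈S} be a finite family of real matrices with C_i of size m_i × n. Suppose that for each i ∈ S there exist an integer n_i, a matrix T_io ∈ ℝ^{n_i×n} of full row rank n_i, matrices A_io ∈ ℝ^{n_i×n_i} and C_io ∈ ℝ^{m_i×n_i} with T_io·A = A_io·T_io, C_i = C_io·T_io, and col(C_io, C_io·A_io, …, C_io·A_io^{n_i−1}) of rank n_i, and an invertible matrix T_iz ∈ ℝ^{n_i×n_i}; set T_iα = T_iz·T_io. Then the rank of the observability matrix of the pair (A, col_{i∈S}(C_i)) (the stacked matrix of the blocks C_i·A^k for i ∈ S and k ∈ {0,…,n−1}) equals the rank of the stacked matrix col_{i∈S}(T_iα). -/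

import Mathlib

/-!
Both ranks are `n` minus the dimension of a kernel, and the kernels coincide. A state `x` is
annihilated by the stacked observability matrix iff each `C i * A ^ k *ᵥ x = Cio i * Aio i ^ k *ᵥ
(Tio i *ᵥ x)` vanishes for `k < n`; as `ni i ≤ n`, observability of `(Aio i, Cio i)` turns this
into `Tio i *ᵥ x = 0`, which is `Tiα i *ᵥ x = 0` because `Tiz i` is invertible.
-/

open Matrix

namespace Matrix

variable {K : Type*} [Field K] {l m n : Type*} [Fintype n]

theorem rank_add_finrank_ker_mulVecLin (M : Matrix m n K) :
    M.rank + Module.finrank K (LinearMap.ker M.mulVecLin) = Fintype.card n := by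
  rw [rank, LinearMap.finrank_range_add_finrank_ker, Module.finrank_fintype_fun_eq_card]

theorem rank_eq_rank_of_ker_mulVecLin_eq {M : Matrix l n K} {N : Matrix m n K}
    (h : LinearMap.ker M.mulVecLin = LinearMap.ker N.mulVecLin) : M.rank = N.rank := by
  have hM := M.rank_add_finrank_ker_mulVecLin
  have hN := N.rank_add_finrank_ker_mulVecLin
  rw [h] at hM
  omega

theorem mulVec_eq_zero_iff_of_rank_eq_card {M : Matrix m n K} (h : M.rank = Fintype.card n)
    {x : n → K} : M *ᵥ x = 0 ↔ x = 0 := by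
  have hker : LinearMap.ker M.mulVecLin = ⊥ := by
    have := M.rank_add_finrank_ker_mulVecLin
    exact Submodule.finrank_eq_zero.mp (by omega)
  exact ⟨fun hx => (LinearMap.ker_eq_bot'.mp hker) x hx, fun hx => hx ▸ mulVec_zero M⟩

theorem sigma_mulVec_eq_zero_iff {ι : Type*} {r : ι → Type*} (F : ∀ i, Matrix (r i) n K)
    (x : n → K) : of (fun (p : Σ i, r i) c => F p.1 p.2 c) *ᵥ x = 0 ↔ ∀ i, F i *ᵥ x = 0 := by
  simp only [funext_iff, Sigma.forall]
  rfl

theorem sigma_prod_mulVec_eq_zero_iff {ι κ : Type*} {r : ι → Type*}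
    (F : ∀ i, κ → Matrix (r i) n K) (x : n → K) :
    of (fun (p : (Σ i, r i) × κ) c => F p.1.1 p.2 p.1.2 c) *ᵥ x = 0 ↔ ∀ i k, F i k *ᵥ x = 0 := by
  simp only [funext_iff, Sigma.forall, Prod.forall]
  exact forall_congr' fun i => forall_comm

section Observability

variable [DecidableEq n]

def obsv (A : Matrix n n K) (C : Matrix m n K) (N : ℕ) : Matrix (Fin N × m) n K :=
  of fun p => (C * A ^ (p.1 : ℕ)) p.2

theorem obsv_mulVec_eq_zero_iff (A : Matrix n n K) (C : Matrix m n K) (N : ℕ) (x : n → K) :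
    obsv A C N *ᵥ x = 0 ↔ ∀ k : Fin N, (C * A ^ (k : ℕ)) *ᵥ x = 0 := by
  simp only [funext_iff, Prod.forall]
  rfl

theorem mul_pow_eq_pow_mul_of_mul_eq [Fintype l] [DecidableEq l] {T : Matrix l n K}
    {A : Matrix n n K} {Ao : Matrix l l K} (h : T * A = Ao * T) (k : ℕ) :
    T * A ^ k = Ao ^ k * T := by
  induction k with
  | zero => simp
  | succ k ih => rw [pow_succ, ← Matrix.mul_assoc, ih, Matrix.mul_assoc, h, ← Matrix.mul_assoc,
      ← pow_succ]

/-- The unobservable subspace of `(A, Co * T)` is the kernel of `T`. -/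
theorem forall_mul_pow_mulVec_eq_zero_iff {r N : ℕ} {T : Matrix (Fin r) n K} {A : Matrix n n K}
    {Ao : Matrix (Fin r) (Fin r) K} {Co : Matrix m (Fin r) K} (hTA : T * A = Ao * T)
    (hobs : (obsv Ao Co r).rank = r) (hrN : r ≤ N) (x : n → K) :
    (∀ k : Fin N, (Co * T * A ^ (k : ℕ)) *ᵥ x = 0) ↔ T *ᵥ x = 0 := by
  have hpow (k : ℕ) : (Co * T * A ^ k) *ᵥ x = (Co * Ao ^ k) *ᵥ (T *ᵥ x) := by
    rw [Matrix.mul_assoc, mul_pow_eq_pow_mul_of_mul_eq hTA, ← Matrix.mul_assoc, mulVec_mulVec]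
  simp only [hpow]
  refine ⟨fun h => ?_, fun h k => by rw [h, mulVec_zero]⟩
  rw [← mulVec_eq_zero_iff_of_rank_eq_card (hobs.trans (Fintype.card_fin r).symm),
    obsv_mulVec_eq_zero_iff]
  exact fun k => h ⟨k, k.2.trans_le hrN⟩

end Observability

end Matrix

theorem rank_obsv_eq_rank_col_Tialpha_general
    {S : Type*} (n : ℕ)
    (A : Matrix (Fin n) (Fin n) ℝ)
    (m : S → ℕ) (C : ∀ i : S, Matrix (Fin (m i)) (Fin n) ℝ)
    (ni : S → ℕ)
    (Tio : ∀ i : S, Matrix (Fin (ni i)) (Fin n) ℝ)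
    (Aio : ∀ i : S, Matrix (Fin (ni i)) (Fin (ni i)) ℝ)
    (Cio : ∀ i : S, Matrix (Fin (m i)) (Fin (ni i)) ℝ)
    (Tiz : ∀ i : S, Matrix (Fin (ni i)) (Fin (ni i)) ℝ)
    (Tiα : ∀ i : S, Matrix (Fin (ni i)) (Fin n) ℝ)
    (hTiorank : ∀ i : S, (Tio i).rank = ni i)
    (hcomm : ∀ i : S, Tio i * A = Aio i * Tio i)
    (hC : ∀ i : S, C i = Cio i * Tio i)
    (hobs : ∀ i : S,
      (Matrix.of fun (p : Fin (ni i) × Fin (m i)) (c : Fin (ni i)) =>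
          (Cio i * (Aio i) ^ (p.1 : ℕ)) p.2 c).rank = ni i)
    (hTiz : ∀ i : S, IsUnit (Tiz i))
    (hTiα : ∀ i : S, Tiα i = Tiz i * Tio i) :
    (Matrix.of fun (p : (Σ i : S, Fin (m i)) × Fin n) (c : Fin n) =>
        (C p.1.1 * A ^ ((p.2 : ℕ))) p.1.2 c).rank
      = (Matrix.of fun (p : Σ i : S, Fin (ni i)) (c : Fin n) =>
          Tiα p.1 p.2 c).rank := by
  have hni (i : S) : ni i ≤ n := hTiorank i ▸ (Tio i).rank_le_width
  apply rank_eq_rank_of_ker_mulVecLin_eq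
  ext x
  simp only [LinearMap.mem_ker, mulVecLin_apply]
  rw [sigma_prod_mulVec_eq_zero_iff (fun i (k : Fin n) => C i * A ^ (k : ℕ)),
    sigma_mulVec_eq_zero_iff Tiα]
  simp only [hC, hTiα]
  refine forall_congr' fun i => ?_
  rw [forall_mul_pow_mulVec_eq_zero_iff (hcomm i) (hobs i) (hni i), ← mulVec_mulVec,
    (mulVec_injective_iff_isUnit.mpr (hTiz i)).eq_iff' (mulVec_zero _)]

/-- If each pair `(A, C i)` admits an observability decomposition with
observable part `(Aio i, Cio i)` via the full-row-rank transformation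
`Tio i`, and `Tiz i` is an invertible coordinate change of the observable
part, then with `Tiα i = Tiz i * Tio i` the rank of the observability matrix
of `(A, col_{i∈S} (C i))` equals the rank of the stacked matrix
`col_{i∈S} (Tiα i)`. -/
theorem rank_obsv_eq_rank_col_Tialpha
    {S : Type*} [Fintype S] [DecidableEq S] (n : ℕ)
    (A : Matrix (Fin n) (Fin n) ℝ)
    (m : S → ℕ) (C : ∀ i : S, Matrix (Fin (m i)) (Fin n) ℝ)
    (ni : S → ℕ)
    (Tio : ∀ i : S, Matrix (Fin (ni i)) (Fin n) ℝ)
    (Aio : ∀ i : S, Matrix (Fin (ni i)) (Fin (ni i)) ℝ)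
    (Cio : ∀ i : S, Matrix (Fin (m i)) (Fin (ni i)) ℝ)
    (Tiz : ∀ i : S, Matrix (Fin (ni i)) (Fin (ni i)) ℝ)
    (Tiα : ∀ i : S, Matrix (Fin (ni i)) (Fin n) ℝ)
    (hTiorank : ∀ i : S, (Tio i).rank = ni i)
    (hcomm : ∀ i : S, Tio i * A = Aio i * Tio i)
    (hC : ∀ i : S, C i = Cio i * Tio i)
    (hobs : ∀ i : S,
      (Matrix.of fun (p : Fin (ni i) × Fin (m i)) (c : Fin (ni i)) =>
          (Cio i * (Aio i) ^ (p.1 : ℕ)) p.2 c).rank = ni i)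
    (hTiz : ∀ i : S, IsUnit (Tiz i))
    (hTiα : ∀ i : S, Tiα i = Tiz i * Tio i) :
    (Matrix.of fun (p : (Σ i : S, Fin (m i)) × Fin n) (c : Fin n) =>
        (C p.1.1 * A ^ ((p.2 : ℕ))) p.1.2 c).rank
      = (Matrix.of fun (p : Σ i : S, Fin (ni i)) (c : Fin n) =>
          Tiα p.1 p.2 c).rank :=
  rank_obsv_eq_rank_col_Tialpha_general n A m C ni Tio Aio Cio Tiz Tiα hTiorank hcomm hC hobs hTiz
    hTiα
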